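/- arXiv:1812.07563 — 3 statements merged into one kernel-verified Lean document; each statement's English description precedes it below -/
import Mathlib

section
/- If G ⊆ ℂⁿ is a balanced domain (open, connected, balanced, containing 0) of finite Lebesgue volume, then for every square-integrable holomorphic function f on G with f(0) = 0, the L² inner product of the constant function 1 with f over G is zero: ∫_G f dV = 0. -/
open MeasureTheory Complex Metric

noncomputable section

namespace Stmt2Aux

/-- Mean value property: the average of a holomorphic function over the unit circle
is its value at the center. -/
lemma meanValue {g : ℂ → ℂ} (hg : DifferentiableOn ℂ g (closedBall 0 1)) :
    (∫ θ in (0:ℝ)..(2*Real.pi), g (Complex.exp (θ * Complex.I))) = 2 * Real.pi * g 0 := by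
  have h := hg.circleIntegral_sub_inv_smul (c := 0) (w := 0) (by simp)
  rw [circleIntegral] at h
  simp only [deriv_circleMap, circleMap, sub_zero, smul_eq_mul, zero_add, ofReal_one,
    one_mul] at h
  have hI : Complex.I ≠ 0 := Complex.I_ne_zero
  have key : ∀ θ : ℝ, Complex.exp (θ * Complex.I) * Complex.I *
      ((Complex.exp (θ * Complex.I))⁻¹ * g (Complex.exp (θ * Complex.I)))
      = Complex.I * g (Complex.exp (θ * Complex.I)) := by
    intro θ
    have hne : Complex.exp (θ * Complex.I) ≠ 0 := Complex.exp_ne_zero _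
    field_simp
  simp only [key] at h
  rw [intervalIntegral.integral_const_mul] at h
  have h2 : Complex.I * (∫ θ in (0:ℝ)..(2*Real.pi), g (Complex.exp (θ * Complex.I)))
      = Complex.I * (2 * Real.pi * g 0) := by
    rw [h]; ring
  have h3 := mul_left_cancel₀ hI h2
  linear_combination h3

variable {n : ℕ}

/-- Scalar multiplication by a unit complex number, as a measurable equivalence of `ℂⁿ`. -/
def rotEquiv (a : Circle) : (Fin n → ℂ) ≃ᵐ (Fin n → ℂ) where
  toFun := fun w i => (a : ℂ) * w i
  invFun := fun w i => ((a⁻¹ : Circle) : ℂ) * w i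
  left_inv := fun w => by
    funext i
    show ((a⁻¹ : Circle) : ℂ) * ((a : ℂ) * w i) = w i
    rw [← mul_assoc, ← Circle.coe_mul, inv_mul_cancel, Circle.coe_one, one_mul]
  right_inv := fun w => by
    funext i
    show ((a : ℂ) * (((a⁻¹ : Circle) : ℂ) * w i)) = w i
    rw [← mul_assoc, ← Circle.coe_mul, mul_inv_cancel, Circle.coe_one, one_mul]
  measurable_toFun := by
    exact measurable_pi_iff.mpr fun i => (measurable_pi_apply i).const_mul _
  measurable_invFun := by
    exact measurable_pi_iff.mpr fun i => (measurable_pi_apply i).const_mul _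

lemma rotEquiv_measurePreserving (a : Circle) :
    MeasurePreserving (rotEquiv (n := n) a) volume volume := by
  have : MeasurePreserving (fun w : Fin n → ℂ => fun i => rotation a (w i))
      (Measure.pi fun _ => volume) (Measure.pi fun _ => volume) :=
    measurePreserving_pi _ _ (fun _ => (rotation a).measurePreserving)
  simpa [rotEquiv, rotation_apply, volume_pi] using this

end Stmt2Aux

open Stmt2Aux

/-- On a balanced domain of finite volume, every square-integrable holomorphic
function vanishing at `0` is `L²`-orthogonal to the constants. -/
theorem stmt2 {n : ℕ} (G : Set (Fin n → ℂ)) (hG : IsOpen G) (hGc : IsConnected G)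
    (h0 : (0 : Fin n → ℂ) ∈ G)
    (hbal : ∀ w ∈ G, ∀ μ : ℂ, ‖μ‖ ≤ 1 → μ • w ∈ G)
    (hvol : volume G < ⊤)
    (f : (Fin n → ℂ) → ℂ) (hf : DifferentiableOn ℂ f G)
    (hL2 : (∫⁻ w in G, (‖f w‖₊ : ENNReal) ^ 2) < ⊤)
    (hf0 : f 0 = 0) :
    (∫ w in G, f w) = 0 := by
  have hmeasG : MeasurableSet G := hG.measurableSet
  have hcont : ContinuousOn f G := hf.continuousOn
  set μ : Measure (Fin n → ℂ) := volume.restrict G with hμ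
  have haesm : AEStronglyMeasurable f μ := hcont.aestronglyMeasurable hmeasG
  haveI : IsFiniteMeasure μ := ⟨by rwa [Measure.restrict_apply_univ]⟩
  -- f is integrable on G
  have hmem : MemLp f 2 μ := by
    refine ⟨haesm, ?_⟩
    rw [eLpNorm_eq_lintegral_rpow_enorm_toReal two_ne_zero ENNReal.ofNat_ne_top]
    refine ENNReal.rpow_lt_top_of_nonneg (by norm_num) ?_
    have : ∀ x, (‖f x‖₊ : ENNReal) ^ (2 : ENNReal).toReal = (‖f x‖₊ : ENNReal) ^ 2 := by
      intro x
      rw [ENNReal.toReal_ofNat, show ((2:ℝ) = ((2:ℕ):ℝ)) by norm_num, ENNReal.rpow_natCast]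
    simp only [enorm_eq_nnnorm, this]
    exact hL2.ne
  have hint : Integrable f μ := hmem.integrable (by norm_num)
  -- the preimage of G under rotation is G
  have hpre : ∀ a : Circle, (rotEquiv (n := n) a) ⁻¹' G = G := by
    intro a
    ext w
    constructor
    · intro hw
      have h2 := hbal _ hw ((a⁻¹ : Circle) : ℂ) (by simp [Circle.norm_coe])
      have : ((a⁻¹ : Circle) : ℂ) • (rotEquiv (n := n) a w) = w := by
        funext i
        simp only [rotEquiv, MeasurableEquiv.coe_mk, Equiv.coe_fn_mk, Pi.smul_apply,
          smul_eq_mul, ← mul_assoc, ← Circle.coe_mul, inv_mul_cancel, Circle.coe_one, one_mul]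
      rwa [this] at h2
    · intro hw
      have := hbal _ hw (a : ℂ) (le_of_eq (Circle.norm_coe a))
      have heq : rotEquiv (n := n) a w = (a : ℂ) • w := rfl
      simpa [Set.mem_preimage, heq] using this
  -- change of variables for each rotation
  have hchange : ∀ a : Circle, (∫ w in G, f ((a : ℂ) • w)) = ∫ w in G, f w := by
    intro a
    have h := (rotEquiv_measurePreserving (n := n) a).setIntegral_preimage_emb
      (rotEquiv (n := n) a).measurableEmbedding f G
    rw [hpre a] at h
    exact h
  have hchange' : ∀ a : Circle, (∫⁻ w in G, (‖f ((a : ℂ) • w)‖₊ : ENNReal))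
      = ∫⁻ w in G, (‖f w‖₊ : ENNReal) := by
    intro a
    have h := (rotEquiv_measurePreserving (n := n) a).setLIntegral_comp_preimage_emb
      (rotEquiv (n := n) a).measurableEmbedding (fun w => (‖f w‖₊ : ENNReal)) G
    rw [hpre a] at h
    exact h
  -- set up the double integral
  set S : Set ℝ := Set.Ioc (0:ℝ) (2 * Real.pi) with hS
  set ν : Measure ℝ := volume.restrict S with hν
  set F : ℝ × (Fin n → ℂ) → ℂ := fun p => f (Complex.exp (p.1 * Complex.I) • p.2) with hF
  have hSmeas : MeasurableSet S := measurableSet_Ioc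
  have hmaps : ∀ (θ : ℝ), ∀ w ∈ G, Complex.exp (θ * Complex.I) • w ∈ G := by
    intro θ w hw
    exact hbal _ hw _ (by rw [Complex.norm_exp_ofReal_mul_I])
  have hFcont : ContinuousOn F ((Set.univ : Set ℝ) ×ˢ G) := by
    apply hcont.comp
    · apply Continuous.continuousOn
      exact ((Complex.continuous_exp.comp ((Complex.continuous_ofReal.comp
        continuous_fst).mul continuous_const))).smul continuous_snd
    · rintro ⟨θ, w⟩ ⟨-, hw⟩
      exact hmaps θ w hw
  have hFaesm : AEStronglyMeasurable F (ν.prod μ) := by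
    rw [hν, hμ, Measure.prod_restrict]
    exact (hFcont.mono (Set.prod_mono (Set.subset_univ S) subset_rfl)).aestronglyMeasurable
      (hSmeas.prod hmeasG)
  -- F is integrable on the product
  have hFint : Integrable F (ν.prod μ) := by
    refine ⟨hFaesm, ?_⟩
    rw [hasFiniteIntegral_def, lintegral_prod _ hFaesm.enorm]
    have hinner : ∀ θ : ℝ, (∫⁻ w, (‖F (θ, w)‖₊ : ENNReal) ∂μ)
        = ∫⁻ w in G, (‖f w‖₊ : ENNReal) := by
      intro θ
      have := hchange' (Circle.exp θ)
      simpa [hF, Circle.coe_exp] using this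
    simp only [enorm_eq_nnnorm, hinner]
    rw [lintegral_const]
    have hL1 : (∫⁻ w in G, (‖f w‖₊ : ENNReal)) < ⊤ := by
      have := hint.2
      rwa [hasFiniteIntegral_def] at this
    have hνuniv : ν Set.univ < ⊤ := by
      rw [hν, Measure.restrict_apply_univ, hS, Real.volume_Ioc]
      exact ENNReal.ofReal_lt_top
    exact ENNReal.mul_lt_top hL1 hνuniv
  -- Fubini
  have hswap : (∫ θ, ∫ w, F (θ, w) ∂μ ∂ν) = ∫ w, ∫ θ, F (θ, w) ∂ν ∂μ :=
    integral_integral_swap hFint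
  -- LHS is (2π) • ∫_G f
  have hLHS : (∫ θ, ∫ w, F (θ, w) ∂μ ∂ν) = (2 * Real.pi) • ∫ w in G, f w := by
    have hθ : ∀ θ : ℝ, (∫ w, F (θ, w) ∂μ) = ∫ w in G, f w := by
      intro θ
      have := hchange (Circle.exp θ)
      simpa [hF, Circle.coe_exp] using this
    simp only [hθ]
    rw [integral_const]
    congr 1
    rw [hν, measureReal_def, Measure.restrict_apply_univ, hS, Real.volume_Ioc, sub_zero,
      ENNReal.toReal_ofReal (by positivity)]
  -- RHS inner integral vanishes by the mean value property
  have hRHS : (∫ w, ∫ θ, F (θ, w) ∂ν ∂μ) = 0 := by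
    rw [hμ]
    rw [setIntegral_congr_fun hmeasG (g := fun _ => (0:ℂ)) ?_]
    · simp
    · intro w hw
      have hgdiff : DifferentiableOn ℂ (fun lam : ℂ => f (lam • w)) (closedBall 0 1) := by
        apply hf.comp
        · exact (differentiable_id.smul_const w).differentiableOn
        · intro lam hlam
          exact hbal _ hw _ (by simpa [Metric.mem_closedBall, dist_zero_right] using hlam)
      have hmv := meanValue hgdiff
      simp only [zero_smul, hf0, mul_zero] at hmv
      have : (∫ θ, F (θ, w) ∂ν) = ∫ θ in (0:ℝ)..(2*Real.pi), f (Complex.exp (θ * Complex.I) • w) := by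
        rw [hν, hS, intervalIntegral.integral_of_le (by positivity)]
      show (∫ θ, F (θ, w) ∂ν) = 0
      rw [this]
      exact hmv
  rw [hLHS, hRHS] at hswap
  have hpi : (2 * Real.pi) ≠ 0 := by positivity
  have := smul_eq_zero.mp hswap
  rcases this with h | h
  · exact absurd h hpi
  · exact h
end
end

section
/- Let D ⊆ ℂⁿ be a domain, a ∈ D, and suppose there exist an orthonormal basis e₁,…,eₙ of ℂⁿ, a constant k > 0, and positive numbers rⱼ = C_D(a;eⱼ) such that k·Σⱼ |Xⱼ| rⱼ ≤ C_D(a;X) ≤ Σⱼ |Xⱼ| rⱼ for all X (where Xⱼ are the coordinates of X in this basis). Then there exists a holomorphic map F = (f₁,…,fₙ) : D → 𝔻ⁿ with |det F'(a)| ≥ kⁿ · Π_{j=1}^n rⱼ. -/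
open MeasureTheory

noncomputable section

def carath {n : ℕ} (D : Set (EuclideanSpace ℂ (Fin n)))
    (z X : EuclideanSpace ℂ (Fin n)) : ℝ :=
  sSup {c : ℝ | ∃ f : EuclideanSpace ℂ (Fin n) → ℂ, DifferentiableOn ℂ f D ∧
    (∀ w ∈ D, ‖f w‖ < 1) ∧ c = ‖fderiv ℂ f z X‖}

/-- Given an orthonormal basis in which `C_D(a;·)` is comparable to the weighted
`ℓ¹`-norm, there is `F ∈ O(D,𝔻ⁿ)` with `|det F'(a)| ≥ kⁿ ∏ rⱼ`. -/
theorem stmt9 {n : ℕ} (D : Set (EuclideanSpace ℂ (Fin n))) (hD : IsOpen D)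
    (hDc : IsConnected D) (a : EuclideanSpace ℂ (Fin n)) (ha : a ∈ D)
    (b : OrthonormalBasis (Fin n) ℂ (EuclideanSpace ℂ (Fin n)))
    (k : ℝ) (hk : 0 < k) (r : Fin n → ℝ) (hr : ∀ j, r j = carath D a (b j))
    (hrpos : ∀ j, 0 < r j)
    (hcomp : ∀ X : EuclideanSpace ℂ (Fin n),
      k * ∑ j, ‖b.repr X j‖ * r j ≤ carath D a X ∧
        carath D a X ≤ ∑ j, ‖b.repr X j‖ * r j)
    (hext : ∀ X : EuclideanSpace ℂ (Fin n), ∃ f : EuclideanSpace ℂ (Fin n) → ℂ,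
      DifferentiableOn ℂ f D ∧ (∀ w ∈ D, ‖f w‖ < 1) ∧
        ‖fderiv ℂ f a X‖ = carath D a X) :
    ∃ F : EuclideanSpace ℂ (Fin n) → Fin n → ℂ,
      (∀ i, DifferentiableOn ℂ (fun w => F w i) D) ∧
      (∀ w ∈ D, ∀ i, ‖F w i‖ < 1) ∧
      k ^ n * ∏ j, r j ≤
        ‖(Matrix.of fun i j => fderiv ℂ (fun w => F w i) a (b j)).det‖ := by
  -- inductive construction
  have key : ∀ m : ℕ, ∀ hm : m ≤ n,
      ∃ f : Fin n → (EuclideanSpace ℂ (Fin n) → ℂ),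
        (∀ i, DifferentiableOn ℂ (f i) D) ∧
        (∀ w ∈ D, ∀ i, ‖f i w‖ < 1) ∧
        k ^ m * ∏ j : Fin m, r (Fin.castLE hm j) ≤
          ‖(Matrix.of fun i j : Fin m =>
              fderiv ℂ (f (Fin.castLE hm i)) a (b (Fin.castLE hm j))).det‖ := by
    intro m
    induction m with
    | zero =>
      intro hm
      refine ⟨fun _ _ => 0, fun i => differentiableOn_const 0, ?_, ?_⟩
      · intro w _ i; simp
      · simp [Matrix.det_fin_zero]
    | succ m IH =>
      intro hm
      have hm' : m ≤ n := le_trans (Nat.le_succ m) hm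
      obtain ⟨f, hfd, hfb, hdet⟩ := IH hm'
      -- cofactors of the new row
      set C : Fin (m + 1) → ℂ := fun j =>
        (-1 : ℂ) ^ (m + (j : ℕ)) *
          (Matrix.of fun (i i' : Fin m) =>
            fderiv ℂ (f (Fin.castLE hm' i)) a
              (b (Fin.castLE hm (j.succAbove i')))).det with hC
      set X : EuclideanSpace ℂ (Fin n) :=
        ∑ j : Fin (m + 1), C j • b (Fin.castLE hm j) with hX
      obtain ⟨g, hgd, hgb, hgx⟩ := hext X
      set i0 : Fin n := ⟨m, lt_of_lt_of_le (Nat.lt_succ_self m) hm⟩ with hi0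
      refine ⟨Function.update f i0 g, ?_, ?_, ?_⟩
      · intro i
        rcases eq_or_ne i i0 with h | h
        · rw [h, Function.update_self]; exact hgd
        · rw [Function.update_of_ne h]; exact hfd i
      · intro w hw i
        rcases eq_or_ne i i0 with h | h
        · rw [h, Function.update_self]; exact hgb w hw
        · rw [Function.update_of_ne h]; exact hfb w hw i
      -- the determinant estimate
      have hcast : ∀ i : Fin m, Fin.castLE hm i.castSucc = Fin.castLE hm' i := by
        intro i; ext; simp
      have hne : ∀ i : Fin m, Fin.castLE hm' i ≠ i0 := by
        intro i h
        have := congrArg Fin.val h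
        simp [hi0] at this
        omega
      have hlast : Fin.castLE hm (Fin.last m) = i0 := by ext; simp [hi0]
      set M : Matrix (Fin (m + 1)) (Fin (m + 1)) ℂ :=
        Matrix.of fun i j =>
          fderiv ℂ (Function.update f i0 g (Fin.castLE hm i)) a
            (b (Fin.castLE hm j)) with hM
      have hrowlast : ∀ j, M (Fin.last m) j = fderiv ℂ g a (b (Fin.castLE hm j)) := by
        intro j
        simp only [hM, Matrix.of_apply]
        rw [hlast, Function.update_self]
      have hsub : ∀ j : Fin (m + 1),
          (M.submatrix (Fin.last m).succAbove j.succAbove) =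
            Matrix.of fun (i i' : Fin m) =>
              fderiv ℂ (f (Fin.castLE hm' i)) a
                (b (Fin.castLE hm (j.succAbove i'))) := by
        intro j
        ext i i'
        simp only [Matrix.submatrix_apply, hM, Matrix.of_apply, Fin.succAbove_last]
        rw [hcast i, Function.update_of_ne (hne i)]
      -- determinant equals fderiv g a X
      have hdetM : M.det = fderiv ℂ g a X := by
        rw [Matrix.det_succ_row M (Fin.last m)]
        have : (fderiv ℂ g a) X
            = ∑ j : Fin (m + 1), C j • fderiv ℂ g a (b (Fin.castLE hm j)) := by
          rw [hX, map_sum]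
          exact Finset.sum_congr rfl fun j _ => (fderiv ℂ g a).map_smul _ _
        rw [this]
        refine Finset.sum_congr rfl fun j _ => ?_
        rw [hrowlast, hsub, hC]
        simp only [smul_eq_mul, Fin.val_last]
        ring
      -- the coefficient of X at i0 is the last cofactor
      have hrepr : b.repr X i0 = C (Fin.last m) := by
        rw [b.repr_apply_apply, hX, inner_sum]
        have horth := b.orthonormal
        rw [orthonormal_iff_ite] at horth
        have h1 : ∀ j : Fin (m + 1),
            (inner ℂ (b i0) (C j • b (Fin.castLE hm j)) : ℂ) =
              if j = Fin.last m then C j else 0 := by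
          intro j
          rw [inner_smul_right, horth]
          have h2 : (i0 = Fin.castLE hm j) ↔ j = Fin.last m := by
            constructor
            · intro h
              exact (Fin.castLE_injective hm (hlast.trans h)).symm
            · rintro rfl; exact hlast.symm
          rcases eq_or_ne j (Fin.last m) with h | h
          · rw [if_pos h, if_pos (h2.mpr h), mul_one]
          · rw [if_neg h, if_neg (fun hh => h (h2.mp hh)), mul_zero]
        rw [Finset.sum_congr rfl fun j _ => h1 j]
        simp
      -- the last cofactor is (up to sign) the previous determinant
      have hmat : (Matrix.of fun (i i' : Fin m) =>
            fderiv ℂ (f (Fin.castLE hm' i)) a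
              (b (Fin.castLE hm ((Fin.last m).succAbove i')))) =
          Matrix.of fun (i i' : Fin m) =>
            fderiv ℂ (f (Fin.castLE hm' i)) a (b (Fin.castLE hm' i')) := by
        ext i i'
        simp only [Matrix.of_apply, Fin.succAbove_last_apply]
        rw [hcast i']
      have hClast : ‖C (Fin.last m)‖ =
          ‖(Matrix.of fun i j : Fin m =>
              fderiv ℂ (f (Fin.castLE hm' i)) a (b (Fin.castLE hm' j))).det‖ := by
        simp only [hC, Fin.val_last]
        rw [hmat, norm_mul, norm_pow, norm_neg, norm_one, one_pow, one_mul]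
      -- main estimate chain
      have hnormM : ‖M.det‖ = carath D a X := by rw [hdetM]; exact hgx
      have hsingle : ‖b.repr X i0‖ * r i0 ≤ ∑ j', ‖b.repr X j'‖ * r j' := by
        refine Finset.single_le_sum (f := fun j => ‖b.repr X j‖ * r j) (fun j _ => ?_) (Finset.mem_univ i0)
        exact mul_nonneg (norm_nonneg _) (le_of_lt (hrpos j))
      have hprod : ∏ j : Fin (m + 1), r (Fin.castLE hm j) =
          (∏ j : Fin m, r (Fin.castLE hm' j)) * r i0 := by
        rw [Fin.prod_univ_castSucc, hlast]
        simp only [hcast]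
      show k ^ (m + 1) * ∏ j : Fin (m + 1), r (Fin.castLE hm j) ≤ ‖M.det‖
      rw [hnormM, hprod, pow_succ]
      calc k ^ m * k * ((∏ j : Fin m, r (Fin.castLE hm' j)) * r i0)
          = k * ((k ^ m * ∏ j : Fin m, r (Fin.castLE hm' j)) * r i0) := by ring
        _ ≤ k * (‖C (Fin.last m)‖ * r i0) := by
            refine mul_le_mul_of_nonneg_left ?_ (le_of_lt hk)
            refine mul_le_mul_of_nonneg_right ?_ (le_of_lt (hrpos i0))
            rw [hClast]; exact hdet
        _ = k * (‖b.repr X i0‖ * r i0) := by rw [hrepr]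
        _ ≤ k * ∑ j', ‖b.repr X j'‖ * r j' :=
            mul_le_mul_of_nonneg_left hsingle (le_of_lt hk)
        _ ≤ carath D a X := (hcomp X).1
  obtain ⟨f, hfd, hfb, hdet⟩ := key n le_rfl
  exact ⟨fun w i => f i w, hfd, hfb, hdet⟩
end
end

section
/- Combined bound: under the hypotheses that there exist an orthonormal basis e₁,…,eₙ, constants k ∈ (0,1], and rⱼ = C_D(a;eⱼ) > 0 with k Σⱼ|Xⱼ|rⱼ ≤ C_D(a;X) ≤ Σⱼ|Xⱼ|rⱼ, one has k^{2n} ≤ CE_D(a) · (Π_{j=1}^n rⱼ)^{-2} ≤ (n!)². -/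
open MeasureTheory

noncomputable section

/-- The Carathéodory–Eisenman volume. -/
def CE {n : ℕ} (D : Set (EuclideanSpace ℂ (Fin n)))
    (a : EuclideanSpace ℂ (Fin n)) : ℝ :=
  sSup {v : ℝ | ∃ F : EuclideanSpace ℂ (Fin n) → Fin n → ℂ,
    (∀ i, DifferentiableOn ℂ (fun w => F w i) D) ∧
    (∀ w ∈ D, ∀ i, ‖F w i‖ < 1) ∧
    v = ‖(Matrix.of fun i j =>
        fderiv ℂ (fun w => F w i) a (EuclideanSpace.single j 1)).det‖ ^ 2}

/-- Combined bound: `k^{2n} ≤ CE_D(a) (∏ rⱼ)⁻² ≤ (n!)²`. -/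
theorem stmt18 {n : ℕ} (D : Set (EuclideanSpace ℂ (Fin n))) (hD : IsOpen D)
    (hDc : IsConnected D) (a : EuclideanSpace ℂ (Fin n)) (ha : a ∈ D)
    (b : OrthonormalBasis (Fin n) ℂ (EuclideanSpace ℂ (Fin n)))
    (k : ℝ) (hk0 : 0 < k) (hk1 : k ≤ 1)
    (r : Fin n → ℝ) (hr : ∀ j, r j = carath D a (b j)) (hrpos : ∀ j, 0 < r j)
    (hcomp : ∀ X : EuclideanSpace ℂ (Fin n),
      k * ∑ j, ‖b.repr X j‖ * r j ≤ carath D a X ∧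
        carath D a X ≤ ∑ j, ‖b.repr X j‖ * r j)
    (hext : ∀ X : EuclideanSpace ℂ (Fin n), ∃ f : EuclideanSpace ℂ (Fin n) → ℂ,
      DifferentiableOn ℂ f D ∧ (∀ w ∈ D, ‖f w‖ < 1) ∧
        ‖fderiv ℂ f a X‖ = carath D a X) :
    k ^ (2 * n) ≤ CE D a * ((∏ j, r j) ^ 2)⁻¹ ∧
      CE D a * ((∏ j, r j) ^ 2)⁻¹ ≤ (n.factorial : ℝ) ^ 2 := by
  classical
  have hP : 0 < ∏ j, r j := Finset.prod_pos fun j _ => hrpos j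
  -- boundedness of the defining set of `carath` at points where `carath > 0`
  have hbdd : ∀ X : EuclideanSpace ℂ (Fin n), 0 < carath D a X →
      BddAbove {c : ℝ | ∃ f : EuclideanSpace ℂ (Fin n) → ℂ, DifferentiableOn ℂ f D ∧
        (∀ w ∈ D, ‖f w‖ < 1) ∧ c = ‖fderiv ℂ f a X‖} := by
    intro X hX
    by_contra h
    unfold carath at hX
    rw [Real.sSup_of_not_bddAbove h] at hX
    exact lt_irrefl 0 hX
  have hle : ∀ (f : EuclideanSpace ℂ (Fin n) → ℂ), DifferentiableOn ℂ f D →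
      (∀ w ∈ D, ‖f w‖ < 1) → ∀ X, 0 < carath D a X →
      ‖fderiv ℂ f a X‖ ≤ carath D a X := by
    intro f hf hfb X hX
    exact le_csSup (hbdd X hX) ⟨f, hf, hfb, rfl⟩
  have hcb : ∀ j, 0 < carath D a (b j) := fun j => (hr j) ▸ hrpos j
  -- the unitary change-of-basis matrix
  set U : Matrix (Fin n) (Fin n) ℂ :=
    Matrix.of fun l j => b.repr (EuclideanSpace.single j 1) l with hU
  have hUnorm : ‖U.det‖ = 1 := by
    have h1 : U.conjTranspose * U = 1 := by
      ext j j'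
      rw [Matrix.mul_apply, Matrix.one_apply]
      calc ∑ l, U.conjTranspose j l * U l j'
          = ∑ l, (starRingEnd ℂ) (b.repr (EuclideanSpace.single j 1) l) *
              b.repr (EuclideanSpace.single j' 1) l := by
            refine Finset.sum_congr rfl fun l _ => ?_
            simp [Matrix.conjTranspose_apply, hU]
        _ = (inner ℂ (b.repr (EuclideanSpace.single j 1))
              (b.repr (EuclideanSpace.single j' 1)) : ℂ) := by
            rw [PiLp.inner_apply]; simp only [RCLike.inner_apply']
        _ = (inner ℂ (EuclideanSpace.single j (1:ℂ)) (EuclideanSpace.single j' (1:ℂ)) : ℂ) :=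
            b.repr.inner_map_map _ _
        _ = if j = j' then 1 else 0 := by
            rw [EuclideanSpace.inner_single_left, EuclideanSpace.single_apply]
            simp [eq_comm]
    have h2 : star U.det * U.det = 1 := by
      rw [← Matrix.det_conjTranspose, ← Matrix.det_mul, h1, Matrix.det_one]
    have h3 : ‖U.det‖ * ‖U.det‖ = 1 := by
      calc ‖U.det‖ * ‖U.det‖ = ‖star U.det * U.det‖ := by rw [norm_mul, norm_star]
        _ = 1 := by rw [h2, norm_one]
    nlinarith [norm_nonneg U.det]
  -- decomposition of derivative in direction of a standard basis vector
  have hsingle : ∀ (g : EuclideanSpace ℂ (Fin n) → ℂ) (j : Fin n),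
      fderiv ℂ g a (EuclideanSpace.single j 1) = ∑ l, U l j * fderiv ℂ g a (b l) := by
    intro g j
    conv_lhs => rw [← b.sum_repr (EuclideanSpace.single j 1)]
    rw [map_sum]
    exact Finset.sum_congr rfl fun l _ => by rw [ContinuousLinearMap.map_smul, smul_eq_mul]; rfl
  -- norms of determinants in standard vs. orthonormal basis agree
  have hdetAU : ∀ F : EuclideanSpace ℂ (Fin n) → Fin n → ℂ,
      ‖(Matrix.of fun i j =>
          fderiv ℂ (fun w => F w i) a (EuclideanSpace.single j 1)).det‖
        = ‖(Matrix.of fun i j => fderiv ℂ (fun w => F w i) a (b j)).det‖ := by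
    intro F
    have hMU : (Matrix.of fun i j =>
          fderiv ℂ (fun w => F w i) a (EuclideanSpace.single j 1))
        = (Matrix.of fun i j => fderiv ℂ (fun w => F w i) a (b j)) * U := by
      ext i j
      rw [Matrix.mul_apply]
      simp only [Matrix.of_apply]
      rw [hsingle (fun w => F w i) j]
      exact Finset.sum_congr rfl fun l _ => mul_comm _ _
    rw [hMU, Matrix.det_mul, norm_mul, hUnorm, mul_one]
  -- generic determinant bound
  have hdetbound : ∀ A : Matrix (Fin n) (Fin n) ℂ, (∀ i l, ‖A i l‖ ≤ r l) →
      ‖A.det‖ ≤ (n.factorial : ℝ) * ∏ j, r j := by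
    intro A hA
    rw [Matrix.det_apply]
    calc ‖∑ σ : Equiv.Perm (Fin n), Equiv.Perm.sign σ • ∏ i, A (σ i) i‖
        ≤ ∑ σ : Equiv.Perm (Fin n), ‖Equiv.Perm.sign σ • ∏ i, A (σ i) i‖ :=
          norm_sum_le _ _
      _ ≤ ∑ _σ : Equiv.Perm (Fin n), ∏ j, r j := by
          refine Finset.sum_le_sum fun σ _ => ?_
          have h1 : ‖Equiv.Perm.sign σ • ∏ i, A (σ i) i‖ = ‖∏ i, A (σ i) i‖ := by
            rcases Int.units_eq_one_or (Equiv.Perm.sign σ) with h | h <;>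
              simp [h, Units.smul_def]
          rw [h1, norm_prod]
          exact Finset.prod_le_prod (fun i _ => norm_nonneg _) (fun i _ => hA (σ i) i)
      _ = (n.factorial : ℝ) * ∏ j, r j := by
          rw [Finset.sum_const, Finset.card_univ, Fintype.card_perm, Fintype.card_fin,
            nsmul_eq_mul]
  -- entries of admissible Jacobians are bounded by r
  have hAentry : ∀ F : EuclideanSpace ℂ (Fin n) → Fin n → ℂ,
      (∀ i, DifferentiableOn ℂ (fun w => F w i) D) →
      (∀ w ∈ D, ∀ i, ‖F w i‖ < 1) →
      ∀ i l, ‖fderiv ℂ (fun w => F w i) a (b l)‖ ≤ r l := by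
    intro F h1 h2 i l
    rw [hr l]
    exact hle _ (h1 i) (fun w hw => h2 w hw i) _ (hcb l)
  -- upper bound on every element of the CE set
  have hub : ∀ v : ℝ, (∃ F : EuclideanSpace ℂ (Fin n) → Fin n → ℂ,
      (∀ i, DifferentiableOn ℂ (fun w => F w i) D) ∧
      (∀ w ∈ D, ∀ i, ‖F w i‖ < 1) ∧
      v = ‖(Matrix.of fun i j =>
          fderiv ℂ (fun w => F w i) a (EuclideanSpace.single j 1)).det‖ ^ 2) →
      v ≤ ((n.factorial : ℝ) * ∏ j, r j) ^ 2 := by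
    rintro v ⟨F, h1, h2, rfl⟩
    rw [hdetAU F]
    have hb := hdetbound (Matrix.of fun i j => fderiv ℂ (fun w => F w i) a (b j))
      (fun i l => hAentry F h1 h2 i l)
    exact pow_le_pow_left₀ (norm_nonneg _) hb 2
  have hCEbdd : BddAbove {v : ℝ | ∃ F : EuclideanSpace ℂ (Fin n) → Fin n → ℂ,
      (∀ i, DifferentiableOn ℂ (fun w => F w i) D) ∧
      (∀ w ∈ D, ∀ i, ‖F w i‖ < 1) ∧
      v = ‖(Matrix.of fun i j =>
          fderiv ℂ (fun w => F w i) a (EuclideanSpace.single j 1)).det‖ ^ 2} :=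
    ⟨((n.factorial : ℝ) * ∏ j, r j) ^ 2, fun v hv => hub v hv⟩
  have hCEub : CE D a ≤ ((n.factorial : ℝ) * ∏ j, r j) ^ 2 := by
    unfold CE
    exact Real.sSup_le (fun v hv => hub v hv) (by positivity)
  -- the recursive construction
  have key : ∀ m, ∀ hm : m ≤ n, ∃ f : Fin m → (EuclideanSpace ℂ (Fin n) → ℂ),
      (∀ i, DifferentiableOn ℂ (f i) D) ∧ (∀ i, ∀ w ∈ D, ‖f i w‖ < 1) ∧
      k ^ m * ∏ j : Fin m, r ⟨n - m + j.1, by have := j.2; omega⟩ ≤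
        ‖(Matrix.of fun i j : Fin m =>
            fderiv ℂ (f i) a (b ⟨n - m + j.1, by have := j.2; omega⟩)).det‖ := by
    intro m
    induction m with
    | zero =>
      intro hm
      refine ⟨Fin.elim0, (fun i => i.elim0), (fun i => i.elim0), ?_⟩
      simp
    | succ m ih =>
      intro hm
      obtain ⟨f, hf1, hf2, hf3⟩ := ih (by omega)
      set col : Fin (m + 1) → Fin n :=
        fun j => ⟨n - (m + 1) + j.1, by have := j.2; omega⟩ with hcol
      have hcolsucc : ∀ j' : Fin m,
          col j'.succ = (⟨n - m + j'.1, by have := j'.2; omega⟩ : Fin n) := by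
        intro j'
        apply Fin.ext
        simp only [hcol, Fin.val_succ]
        omega
      have hcolinj : Function.Injective col := by
        intro x y hxy
        have h := congrArg Fin.val hxy
        simp only [hcol] at h
        exact Fin.ext (by omega)
      set N : Fin (m + 1) → Matrix (Fin m) (Fin m) ℂ :=
        fun j => Matrix.of fun i j' => fderiv ℂ (f i) a (b (col (j.succAbove j'))) with hN
      set c : Fin (m + 1) → ℂ := fun j => (-1 : ℂ) ^ (j : ℕ) * (N j).det with hc
      set X : EuclideanSpace ℂ (Fin n) := ∑ j, c j • b (col j) with hX
      obtain ⟨g, hg1, hg2, hg3⟩ := hext X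
      refine ⟨Fin.cons g f, ?_, ?_, ?_⟩
      · intro i
        refine Fin.cases ?_ ?_ i
        · exact hg1
        · intro i; simpa using hf1 i
      · intro i
        refine Fin.cases ?_ ?_ i
        · exact hg2
        · intro i; simpa using fun w hw => hf2 i w hw
      · show k ^ (m + 1) * ∏ j : Fin (m + 1), r (col j) ≤
          ‖(Matrix.of fun i j => fderiv ℂ ((Fin.cons g f : Fin (m + 1) → EuclideanSpace ℂ (Fin n) → ℂ) i) a (b (col j))).det‖
        -- determinant via cofactor expansion along row 0
        have hdet : (Matrix.of fun i j =>
              fderiv ℂ ((Fin.cons g f : Fin (m + 1) → EuclideanSpace ℂ (Fin n) → ℂ) i) a (b (col j)) :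
              Matrix (Fin (m + 1)) (Fin (m + 1)) ℂ).det = fderiv ℂ g a X := by
          rw [Matrix.det_succ_row_zero, hX, map_sum]
          refine Finset.sum_congr rfl fun j _ => ?_
          have hA0 : (Matrix.of fun i j =>
              fderiv ℂ ((Fin.cons g f : Fin (m + 1) → EuclideanSpace ℂ (Fin n) → ℂ) i) a (b (col j))) 0 j = fderiv ℂ g a (b (col j)) := by
            simp
          have hsubm : (Matrix.of fun i j =>
                fderiv ℂ ((Fin.cons g f : Fin (m + 1) → EuclideanSpace ℂ (Fin n) → ℂ) i) a (b (col j))).submatrix Fin.succ j.succAbove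
              = N j := by
            ext i j'
            simp [hN, Fin.cons_succ]
          rw [hA0, hsubm, ContinuousLinearMap.map_smul, smul_eq_mul, hc]
          ring
        -- identification of N 0 with the inductive matrix
        have hN0 : N 0 = Matrix.of fun (i j' : Fin m) =>
            fderiv ℂ (f i) a (b ⟨n - m + j'.1, by have := j'.2; omega⟩) := by
          ext i j'
          simp only [hN, Matrix.of_apply, Fin.zero_succAbove]
          rw [hcolsucc j']
        have hc0 : k ^ m * ∏ j : Fin m, r ⟨n - m + j.1, by have := j.2; omega⟩ ≤ ‖c 0‖ := by
          have : ‖c 0‖ = ‖(N 0).det‖ := by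
            simp [hc]
          rw [this, hN0]
          exact hf3
        -- the coordinate of X at col 0 is c 0
        have hrepr : b.repr X (col 0) = c 0 := by
          have hX2 : b.repr X = ∑ j, c j • EuclideanSpace.single (col j) 1 := by
            rw [hX, map_sum]
            exact Finset.sum_congr rfl fun j _ => by rw [LinearIsometryEquiv.map_smul, b.repr_self]
          rw [hX2, WithLp.ofLp_sum, Finset.sum_apply]
          rw [Finset.sum_eq_single 0]
          · simp [EuclideanSpace.single_apply]
          · intro j _ hj
            have hne : col 0 ≠ col j := fun h => hj (hcolinj h).symm
            simp [EuclideanSpace.single_apply, hne]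
          · intro h; exact absurd (Finset.mem_univ _) h
        -- lower bound on carath at X
        have hsum : k * (‖c 0‖ * r (col 0)) ≤ carath D a X := by
          have h1 := (hcomp X).1
          have h2 : ‖b.repr X (col 0)‖ * r (col 0) ≤ ∑ l, ‖b.repr X l‖ * r l :=
            Finset.single_le_sum
              (fun l _ => mul_nonneg (norm_nonneg _) (hrpos l).le) (Finset.mem_univ (col 0))
          rw [hrepr] at h2
          nlinarith
        have hprod : ∏ j : Fin (m + 1), r (col j)
            = r (col 0) * ∏ j : Fin m, r ⟨n - m + j.1, by have := j.2; omega⟩ := by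
          rw [Fin.prod_univ_succ]
          refine congrArg _ (Finset.prod_congr rfl fun j _ => ?_)
          rw [hcolsucc j]
        calc k ^ (m + 1) * ∏ j : Fin (m + 1), r (col j)
            = k * (k ^ m * ∏ j : Fin m, r ⟨n - m + j.1, by have := j.2; omega⟩) * r (col 0) := by
              rw [hprod]; ring
          _ ≤ k * ‖c 0‖ * r (col 0) := by
              have := mul_le_mul_of_nonneg_left hc0 hk0.le
              exact mul_le_mul_of_nonneg_right this (hrpos (col 0)).le
          _ ≤ carath D a X := by
              have := hsum
              nlinarith [hsum]
          _ = ‖fderiv ℂ g a X‖ := hg3.symm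
          _ = ‖(Matrix.of fun i j =>
                fderiv ℂ ((Fin.cons g f : Fin (m + 1) → EuclideanSpace ℂ (Fin n) → ℂ) i) a (b (col j))).det‖ := by rw [hdet]
  -- assemble the lower bound
  obtain ⟨f, hf1, hf2, hf3⟩ := key n le_rfl
  simp only [Nat.sub_self, Nat.zero_add, Fin.eta] at hf3
  have hmem : ‖(Matrix.of fun i j =>
      fderiv ℂ (fun w => f i w) a (EuclideanSpace.single j 1)).det‖ ^ 2 ∈
      {v : ℝ | ∃ F : EuclideanSpace ℂ (Fin n) → Fin n → ℂ,
        (∀ i, DifferentiableOn ℂ (fun w => F w i) D) ∧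
        (∀ w ∈ D, ∀ i, ‖F w i‖ < 1) ∧
        v = ‖(Matrix.of fun i j =>
            fderiv ℂ (fun w => F w i) a (EuclideanSpace.single j 1)).det‖ ^ 2} :=
    ⟨fun w i => f i w, fun i => hf1 i, fun w hw i => hf2 i w hw, rfl⟩
  have hlb : k ^ (2 * n) * (∏ j, r j) ^ 2 ≤ CE D a := by
    have h1 : k ^ n * ∏ j, r j ≤ ‖(Matrix.of fun i j =>
        fderiv ℂ (fun w => f i w) a (EuclideanSpace.single j 1)).det‖ := by
      rw [hdetAU (fun w i => f i w)]
      exact hf3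
    have h2 : (k ^ n * ∏ j, r j) ^ 2 ≤ ‖(Matrix.of fun i j =>
        fderiv ℂ (fun w => f i w) a (EuclideanSpace.single j 1)).det‖ ^ 2 :=
      pow_le_pow_left₀ (by positivity) h1 2
    calc k ^ (2 * n) * (∏ j, r j) ^ 2 = (k ^ n * ∏ j, r j) ^ 2 := by
          rw [mul_pow, ← pow_mul, Nat.mul_comm]
      _ ≤ _ := h2
      _ ≤ CE D a := le_csSup hCEbdd hmem
  constructor
  · rw [← div_eq_mul_inv, le_div_iff₀ (by positivity)]
    exact hlb
  · rw [← div_eq_mul_inv, div_le_iff₀ (by positivity)]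
    calc CE D a ≤ ((n.factorial : ℝ) * ∏ j, r j) ^ 2 := hCEub
      _ = (n.factorial : ℝ) ^ 2 * (∏ j, r j) ^ 2 := by ring
end
end
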